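/- arXiv:2102.05890 — 3 statements merged into one kernel-verified Lean document; each statement's English description precedes it below -/
import Mathlib

section
/- Let λ > 0, σ > 0, N ∈ ℕ, and for each n ∈ {0,…,N−1} let a_n ≥ 0 and g_n ∈ ℝ, and let d > 0 satisfy d² + a_n² − 2·g_n·a_n·d > 0 for all n. Define Δd_n(x) = √(x² + a_n² − 2·g_n·a_n·x) − x. Then the distance Fisher information J(d) = (4π²/(λ²σ²)) · Σ_{n=0}^{N−1} (Δd_n'(d))² equals (4π²/(λ²σ²)) · Σ_{n=0}^{N−1} [2·d² + a_n²·(g_n² + 1) − 4·g_n·d·a_n − 2·(d − g_n·a_n)·√(d² + a_n² − 2·g_n·d·a_n)] / (d² + a_n² − 2·g_n·a_n·d). -/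
open Real

lemma hasDerivAt_sqrt_lawOfCosines_sub (A G x : ℝ) (hu : 0 < x ^ 2 + A ^ 2 - 2 * G * A * x) :
    HasDerivAt (fun y : ℝ => √(y ^ 2 + A ^ 2 - 2 * G * A * y) - y)
      ((x - G * A) / √(x ^ 2 + A ^ 2 - 2 * G * A * x) - 1) x := by
  have hq : HasDerivAt (fun y : ℝ => y ^ 2 + A ^ 2 - 2 * G * A * y) (2 * x - 2 * G * A) x :=
    (((hasDerivAt_pow 2 x).add_const (A ^ 2)).sub
      ((hasDerivAt_id x).const_mul (2 * G * A))).congr_deriv (by norm_num)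
  exact ((hq.sqrt hu.ne').sub (hasDerivAt_id x)).congr_deriv (by field_simp)

lemma div_sqrt_sub_one_sq {u v : ℝ} (hu : 0 < u) :
    (v / √u - 1) ^ 2 = (v ^ 2 + u - 2 * v * √u) / u := by
  have hsqrt : 0 < √u := sqrt_pos.mpr hu
  rw [div_sub_one hsqrt.ne', div_pow, sq_sqrt hu.le]
  congr 1
  linear_combination sq_sqrt hu.le

theorem stmt_8_general (lam sig d : ℝ)
    (N : ℕ) (a g : ℕ → ℝ)
    (hpos : ∀ n ∈ Finset.range N, 0 < d ^ 2 + a n ^ 2 - 2 * g n * a n * d) :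
    4 * π ^ 2 / (lam ^ 2 * sig ^ 2) *
        ∑ n ∈ Finset.range N,
          (deriv (fun x : ℝ =>
            Real.sqrt (x ^ 2 + a n ^ 2 - 2 * g n * a n * x) - x) d) ^ 2 =
      4 * π ^ 2 / (lam ^ 2 * sig ^ 2) *
        ∑ n ∈ Finset.range N,
          (2 * d ^ 2 + a n ^ 2 * (g n ^ 2 + 1) - 4 * g n * d * a n -
            2 * (d - g n * a n) *
              Real.sqrt (d ^ 2 + a n ^ 2 - 2 * g n * d * a n)) /
            (d ^ 2 + a n ^ 2 - 2 * g n * a n * d) := by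
  congr 1
  refine Finset.sum_congr rfl fun n hn => ?_
  have hu := hpos n hn
  rw [(hasDerivAt_sqrt_lawOfCosines_sub (a n) (g n) d hu).deriv, div_sqrt_sub_one_sq hu]
  rw [show d ^ 2 + a n ^ 2 - 2 * g n * d * a n = d ^ 2 + a n ^ 2 - 2 * g n * a n * d by ring]
  ring

theorem stmt_8 (lam sig d : ℝ) (hlam : 0 < lam) (hsig : 0 < sig) (hd : 0 < d)
    (N : ℕ) (a g : ℕ → ℝ) (ha : ∀ n ∈ Finset.range N, 0 ≤ a n)
    (hpos : ∀ n ∈ Finset.range N, 0 < d ^ 2 + a n ^ 2 - 2 * g n * a n * d) :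
    4 * π ^ 2 / (lam ^ 2 * sig ^ 2) *
        ∑ n ∈ Finset.range N,
          (deriv (fun x : ℝ =>
            Real.sqrt (x ^ 2 + a n ^ 2 - 2 * g n * a n * x) - x) d) ^ 2 =
      4 * π ^ 2 / (lam ^ 2 * sig ^ 2) *
        ∑ n ∈ Finset.range N,
          (2 * d ^ 2 + a n ^ 2 * (g n ^ 2 + 1) - 4 * g n * d * a n -
            2 * (d - g n * a n) *
              Real.sqrt (d ^ 2 + a n ^ 2 - 2 * g n * d * a n)) /
            (d ^ 2 + a n ^ 2 - 2 * g n * a n * d) :=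
  stmt_8_general lam sig d N a g hpos
end

section
/- Let λ > 0, σ > 0, D > 0, d > 0, and N ∈ ℕ. Consider a circular array of N antennas q_n = ((0, (D/2)·sin(2πn/N), (D/2)·cos(2πn/N)) ∈ ℝ³, n = 0,…,N−1, reference point q₀ = 0, and a source at p = (d, 0, 0). Define Δd_n(x) = ‖(x,0,0) − q_n‖ − x for x > 0. Then the distance Fisher information (4π²/(λ²σ²))·Σ_{n=0}^{N−1} (Δd_n'(d))² equals (4·N·π²/(λ²σ²)) · (2 + D²/(4d²) − 2·√(1 + D²/(4d²))) / (1 + D²/(4d²)). -/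
/-! All antennas lie on a circle of radius `D / 2` around the axis carrying the source, so every
one of them is at distance `√(x² + D²/4)` from the source `(x, 0, 0)`: the `N` terms of the
Fisher information coincide, each being the square of `d / √(d² + D²/4) - 1`. -/

open Real

/-- The point of ℝ³ (with the Euclidean norm) with coordinates `x`, `y`, `z`. -/
noncomputable def vec3 (x y z : ℝ) : EuclideanSpace ℝ (Fin 3) :=
  (WithLp.equiv 2 (Fin 3 → ℝ)).symm ![x, y, z]

lemma norm_vec3 (x y z : ℝ) : ‖vec3 x y z‖ = √(x ^ 2 + y ^ 2 + z ^ 2) := by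
  simp [vec3, EuclideanSpace.norm_eq, Fin.sum_univ_three, add_assoc]

lemma vec3_sub_vec3 (x y z x' y' z' : ℝ) :
    vec3 x y z - vec3 x' y' z' = vec3 (x - x') (y - y') (z - z') := by
  ext i
  fin_cases i <;> simp [vec3]

lemma norm_vec3_axis_sub_circle (x r θ : ℝ) :
    ‖vec3 x 0 0 - vec3 0 (r * sin θ) (r * cos θ)‖ = √(x ^ 2 + r ^ 2) := by
  rw [vec3_sub_vec3, norm_vec3]
  congr 1
  linear_combination r ^ 2 * sin_sq_add_cos_sq θ

lemma hasDerivAt_sqrt_sq_add_sub {c x : ℝ} (h : x ^ 2 + c ≠ 0) :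
    HasDerivAt (fun x => √(x ^ 2 + c) - x) (x / √(x ^ 2 + c) - 1) x := by
  have hsq : HasDerivAt (fun x => x ^ 2 + c) (2 * x) x := by
    simpa using (hasDerivAt_pow 2 x).add_const c
  refine ((hsq.sqrt h).sub (hasDerivAt_id' x)).congr_deriv ?_
  field_simp

lemma div_sqrt_sq_add {d : ℝ} (hd : 0 < d) (c : ℝ) :
    d / √(d ^ 2 + c) = (√(1 + c / d ^ 2))⁻¹ := by
  have hfactor : d ^ 2 + c = d ^ 2 * (1 + c / d ^ 2) := by field_simp
  rw [hfactor, sqrt_mul (by positivity), sqrt_sq hd.le, div_mul_cancel_left₀ hd.ne']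

lemma inv_sqrt_one_add_sub_one_sq {t : ℝ} (ht : -1 < t) :
    ((√(1 + t))⁻¹ - 1) ^ 2 = (2 + t - 2 * √(1 + t)) / (1 + t) := by
  have hpos : 0 < 1 + t := by linarith
  have hs2 : √(1 + t) ^ 2 = 1 + t := sq_sqrt hpos.le
  have hs : √(1 + t) ≠ 0 := (sqrt_pos.2 hpos).ne'
  field_simp
  linear_combination (2 * √(1 + t) - 1) * hs2

theorem stmt_11_general (lam sig D d : ℝ) (hd : 0 < d) (N : ℕ) :
    4 * π ^ 2 / (lam ^ 2 * sig ^ 2) *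
        ∑ n ∈ Finset.range N,
          (deriv (fun x : ℝ =>
            ‖vec3 x 0 0 -
              vec3 0 (D / 2 * Real.sin (2 * π * n / N))
                (D / 2 * Real.cos (2 * π * n / N))‖ - x) d) ^ 2 =
      4 * N * π ^ 2 / (lam ^ 2 * sig ^ 2) *
        ((2 + D ^ 2 / (4 * d ^ 2) - 2 * Real.sqrt (1 + D ^ 2 / (4 * d ^ 2))) /
          (1 + D ^ 2 / (4 * d ^ 2))) := by
  have hderiv (θ : ℝ) :
      deriv (fun x => ‖vec3 x 0 0 - vec3 0 (D / 2 * sin θ) (D / 2 * cos θ)‖ - x) d =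
        (√(1 + D ^ 2 / (4 * d ^ 2)))⁻¹ - 1 := by
    simp_rw [norm_vec3_axis_sub_circle]
    have hpos : 0 < d ^ 2 + (D / 2) ^ 2 := by positivity
    rw [(hasDerivAt_sqrt_sq_add_sub hpos.ne').deriv, div_sqrt_sq_add hd]
    ring_nf
  have ht : -1 < D ^ 2 / (4 * d ^ 2) := by linarith [show 0 ≤ D ^ 2 / (4 * d ^ 2) by positivity]
  simp_rw [hderiv, Finset.sum_const, Finset.card_range, nsmul_eq_mul,
    inv_sqrt_one_add_sub_one_sq ht]
  ring

theorem stmt_11 (lam sig D d : ℝ) (hlam : 0 < lam) (hsig : 0 < sig)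
    (hD : 0 < D) (hd : 0 < d) (N : ℕ) :
    4 * π ^ 2 / (lam ^ 2 * sig ^ 2) *
        ∑ n ∈ Finset.range N,
          (deriv (fun x : ℝ =>
            ‖vec3 x 0 0 -
              vec3 0 (D / 2 * Real.sin (2 * π * n / N))
                (D / 2 * Real.cos (2 * π * n / N))‖ - x) d) ^ 2 =
      4 * N * π ^ 2 / (lam ^ 2 * sig ^ 2) *
        ((2 + D ^ 2 / (4 * d ^ 2) - 2 * Real.sqrt (1 + D ^ 2 / (4 * d ^ 2))) /
          (1 + D ^ 2 / (4 * d ^ 2))) :=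
  stmt_11_general lam sig D d hd N
end

section
/- Let λ > 0, σ > 0, D > 0, N ∈ ℕ, and for each n ∈ {0,…,N−1} let g_n ∈ ℝ, and let d > 0 satisfy 4d² + D² − 4·g_n·d·D > 0 for all n. Define Δd_n(x) = √(x² + (D/2)² − 2·g_n·(D/2)·x) − x. Then the distance Fisher information (4π²/(λ²σ²))·Σ_{n=0}^{N−1} (Δd_n'(d))² equals (4π²/(λ²σ²))·Σ_{n=0}^{N−1} [8d² + D²·(g_n² + 1) − 8·g_n·d·D − 2·(2d − g_n·D)·√(4d² + D² − 4·g_n·d·D)] / (4d² + D² − 4·g_n·d·D). -/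
open Real

/-
The extra distance `Δd(x) = √(x² + a² − 2gax) − x` to an antenna at distance `a` from the
reference point has derivative `(x − ga)/√(x² + a² − 2gax) − 1` wherever the radicand is
positive. For `a = D/2` the radicand is `S/4` with `S = 4d² + D² − 4gdD`, and squaring the
derivative and clearing the denominator `S` (using `(√S)² = S`) gives the stated closed form
term by term.
-/

theorem hasDerivAt_sqrt_sub_id (a g x : ℝ) (hx : 0 < x ^ 2 + a ^ 2 - 2 * g * a * x) :
    HasDerivAt (fun y : ℝ => √(y ^ 2 + a ^ 2 - 2 * g * a * y) - y)
      ((x - g * a) / √(x ^ 2 + a ^ 2 - 2 * g * a * x) - 1) x := by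
  have hq : HasDerivAt (fun y : ℝ => y ^ 2 + a ^ 2 - 2 * g * a * y) (2 * x - 2 * g * a) x := by
    simpa [Pi.sub_def] using ((hasDerivAt_pow 2 x).add_const (a ^ 2)).sub
      ((hasDerivAt_id x).const_mul (2 * g * a))
  refine ((hq.sqrt hx.ne').sub (hasDerivAt_id x)).congr_deriv ?_
  field_simp

theorem sqrt_half_radicand (D g d : ℝ) (hS : 0 ≤ 4 * d ^ 2 + D ^ 2 - 4 * g * d * D) :
    √(d ^ 2 + (D / 2) ^ 2 - 2 * g * (D / 2) * d) = √(4 * d ^ 2 + D ^ 2 - 4 * g * d * D) / 2 := by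
  rw [show d ^ 2 + (D / 2) ^ 2 - 2 * g * (D / 2) * d
      = (4 * d ^ 2 + D ^ 2 - 4 * g * d * D) / 2 ^ 2 by ring,
    sqrt_div hS, sqrt_sq zero_le_two]

theorem deriv_sqrt_sub_id_sq (D g d : ℝ) (hS : 0 < 4 * d ^ 2 + D ^ 2 - 4 * g * d * D) :
    (deriv (fun x : ℝ => √(x ^ 2 + (D / 2) ^ 2 - 2 * g * (D / 2) * x) - x) d) ^ 2 =
      (8 * d ^ 2 + D ^ 2 * (g ^ 2 + 1) - 8 * g * d * D -
          2 * (2 * d - g * D) * √(4 * d ^ 2 + D ^ 2 - 4 * g * d * D)) /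
        (4 * d ^ 2 + D ^ 2 - 4 * g * d * D) := by
  have hq : 0 < d ^ 2 + (D / 2) ^ 2 - 2 * g * (D / 2) * d := by nlinarith
  rw [(hasDerivAt_sqrt_sub_id (D / 2) g d hq).deriv, sqrt_half_radicand D g d hS.le]
  have hs2 := sq_sqrt hS.le
  generalize √(4 * d ^ 2 + D ^ 2 - 4 * g * d * D) = s at hs2 ⊢
  have hs : s ≠ 0 := by rintro rfl; linarith
  rw [← hs2]
  field_simp
  linear_combination hs2

theorem stmt_19_general (lam sig D d : ℝ) (N : ℕ) (g : ℕ → ℝ)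
    (hpos : ∀ n ∈ Finset.range N, 0 < 4 * d ^ 2 + D ^ 2 - 4 * g n * d * D) :
    4 * π ^ 2 / (lam ^ 2 * sig ^ 2) *
        ∑ n ∈ Finset.range N,
          (deriv (fun x : ℝ =>
            Real.sqrt (x ^ 2 + (D / 2) ^ 2 - 2 * g n * (D / 2) * x) - x) d) ^ 2 =
      4 * π ^ 2 / (lam ^ 2 * sig ^ 2) *
        ∑ n ∈ Finset.range N,
          (8 * d ^ 2 + D ^ 2 * (g n ^ 2 + 1) - 8 * g n * d * D -
            2 * (2 * d - g n * D) *
              Real.sqrt (4 * d ^ 2 + D ^ 2 - 4 * g n * d * D)) /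
            (4 * d ^ 2 + D ^ 2 - 4 * g n * d * D) := by
  congr 1
  exact Finset.sum_congr rfl fun n hn => deriv_sqrt_sub_id_sq D (g n) d (hpos n hn)

theorem stmt_19 (lam sig D d : ℝ) (hlam : 0 < lam) (hsig : 0 < sig)
    (hD : 0 < D) (hd : 0 < d) (N : ℕ) (g : ℕ → ℝ)
    (hpos : ∀ n ∈ Finset.range N, 0 < 4 * d ^ 2 + D ^ 2 - 4 * g n * d * D) :
    4 * π ^ 2 / (lam ^ 2 * sig ^ 2) *
        ∑ n ∈ Finset.range N,
          (deriv (fun x : ℝ =>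
            Real.sqrt (x ^ 2 + (D / 2) ^ 2 - 2 * g n * (D / 2) * x) - x) d) ^ 2 =
      4 * π ^ 2 / (lam ^ 2 * sig ^ 2) *
        ∑ n ∈ Finset.range N,
          (8 * d ^ 2 + D ^ 2 * (g n ^ 2 + 1) - 8 * g n * d * D -
            2 * (2 * d - g n * D) *
              Real.sqrt (4 * d ^ 2 + D ^ 2 - 4 * g n * d * D)) /
            (4 * d ^ 2 + D ^ 2 - 4 * g n * d * D) :=
  stmt_19_general lam sig D d N g hpos
end
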